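/- arXiv:hep-th/9511044 — 2 statements merged into one kernel-verified Lean document; each statement's English description precedes it below -/
import Mathlib

section
/- The cometric of a finite-dimensional involutory Hopf algebra over ℂ is nondegenerate: the bilinear form h on the dual Hopf algebra A* defined by h(ξ,η) = tr(L*_{ξ∗η}) is a nondegenerate bilinear form (equivalently, its Gram matrix with respect to any basis of A* is invertible). -/
open TensorProduct Coalgebra

/-- The convolution product on the dual of a coalgebra, as a bilinear map:
`(ξ ∗ η)(a) = Σ ξ(a⁽¹⁾) η(a⁽²⁾)`.  `dualConv A ξ` is left convolution
multiplication `L*_ξ` by `ξ` on the dual. -/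
noncomputable def dualConv (A : Type*) [AddCommGroup A] [Module ℂ A] [Coalgebra ℂ A] :
    Module.Dual ℂ A →ₗ[ℂ] Module.Dual ℂ A →ₗ[ℂ] Module.Dual ℂ A :=
  LinearMap.mk₂ ℂ
    (fun ξ η => LinearMap.mul' ℂ ℂ ∘ₗ TensorProduct.map ξ η ∘ₗ (comul : A →ₗ[ℂ] A ⊗[ℂ] A))
    (fun ξ₁ ξ₂ η => by
      simp [TensorProduct.map_add_left, LinearMap.add_comp, LinearMap.comp_add])
    (fun c ξ η => by
      simp [TensorProduct.map_smul_left, LinearMap.smul_comp, LinearMap.comp_smul])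
    (fun ξ η₁ η₂ => by
      simp [TensorProduct.map_add_right, LinearMap.add_comp, LinearMap.comp_add])
    (fun c ξ η => by
      simp [TensorProduct.map_smul_right, LinearMap.smul_comp, LinearMap.comp_smul])

/-- The cometric: the bilinear form `h(ξ,η) = tr(L*_{ξ∗η})` on the dual Hopf algebra. -/
noncomputable def hopfCometric (A : Type*) [AddCommGroup A] [Module ℂ A] [Coalgebra ℂ A] :
    Module.Dual ℂ A →ₗ[ℂ] Module.Dual ℂ A →ₗ[ℂ] ℂ :=
  (dualConv A).compr₂ ((LinearMap.trace ℂ (Module.Dual ℂ A)) ∘ₗ (dualConv A))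

/-!
Since `θ ↦ L*_θ` is a representation of `A*`, `h(ξ, η) = tr(L*_ξ L*_η)` is symmetric, so it
suffices to show that `h` separates on the left. `L*_θ` is the transpose of
`a ↦ a ↼ θ = Σ θ(a⁽¹⁾) a⁽²⁾`, hence `h(ξ, η) = η(χ ↼ ξ)` for the element `χ ∈ A` with
`θ(χ) = tr(· ↼ θ)`. Because `S² = id`, cyclicity of the trace makes `χ` a right integral,
`χ a = ε(a) χ`, and `ε(χ) = tr(id) = dim A ≠ 0`. For a right integral,
`χ ↼ (ξ(· a)) = (χ ↼ ξ) S(a)`, so if `ξ` lies in the left radical then `Σ ξ(χ⁽¹⁾ a) χ⁽²⁾ = 0`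
for every `a`; expanding in a basis then gives `ε(χ) ξ(b) = Σ ξ(χ⁽¹⁾ S(χ⁽²⁾) b) = 0`.
-/

namespace Coalgebra

variable {R C : Type*} [CommSemiring R] [AddCommMonoid C] [Module R C] [Coalgebra R C]

lemma sum_counit_right_smul {ι : Type*} {c : C} (r : Repr R c ι) :
    ∑ i ∈ r.index, counit (R := R) (r.right i) • r.left i = c := by
  simpa only [map_sum, _root_.TensorProduct.rid_tmul, one_smul] using
    congrArg (_root_.TensorProduct.rid R C) (sum_tmul_counit_eq r)

/-- The hit action `a ↼ θ` of `C*` on `C`. -/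
noncomputable def rightHit (θ : Module.Dual R C) : C →ₗ[R] C :=
  _root_.TensorProduct.lid R C ∘ₗ θ.rTensor C ∘ₗ comul

lemma Repr.rightHit_apply {ι : Type*} {c : C} (r : Repr R c ι) (θ : Module.Dual R C) :
    rightHit θ c = ∑ i ∈ r.index, θ (r.left i) • r.right i := by
  simp [rightHit, ← r.eq]

lemma rightHit_counit : rightHit (counit (R := R) (A := C)) = LinearMap.id := by
  ext c
  simp [rightHit, rTensor_counit_comul]

end Coalgebra

lemma Algebra.TensorProduct.lid_rTensor_mul_tmul {R A : Type*} [CommSemiring R] [Semiring A]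
    [Algebra R A] (f : Module.Dual R A) (x : A ⊗[R] A) (a c : A) :
    _root_.TensorProduct.lid R A (f.rTensor A (x * (a ⊗ₜ c))) =
      _root_.TensorProduct.lid R A ((f ∘ₗ LinearMap.mulRight R a).rTensor A x) * c := by
  induction x using TensorProduct.induction_on with
  | zero => simp
  | tmul u v => simp [Algebra.TensorProduct.tmul_mul_tmul]
  | add x y hx hy => simp [add_mul, hx, hy]

namespace HopfAlgebra

section Semiring

variable {R A : Type*} [CommSemiring R] [Semiring A] [HopfAlgebra R A]

lemma sum_comul_mul_one_tmul_antipode {ι : Type*} {a : A} (r : Repr R a ι) :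
    ∑ i ∈ r.index, comul (r.left i) * (1 ⊗ₜ[R] antipode R (r.right i)) = a ⊗ₜ[R] 1 := by
  have h := congrArg (LinearMap.lTensor A (LinearMap.mul' R A ∘ₗ (antipode R).lTensor A))
    (sum_tmul_tmul_eq r (fun i => ℛ R (r.left i)) (fun i => ℛ R (r.right i)))
  simp only [map_sum, LinearMap.lTensor_tmul, LinearMap.comp_apply, LinearMap.mul'_apply,
    ← TensorProduct.tmul_sum, sum_mul_antipode_eq_smul, TensorProduct.tmul_smul,
    TensorProduct.smul_tmul', ← TensorProduct.sum_tmul, sum_counit_right_smul] at h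
  rw [← h]
  refine Finset.sum_congr rfl fun i _ => ?_
  rw [← (ℛ R (r.left i)).eq, Finset.sum_mul]
  simp [Algebra.TensorProduct.tmul_mul_tmul]

lemma rightHit_comp_mulRight {ι : Type*} {a : A} (r : Repr R a ι) (ξ : Module.Dual R A) :
    rightHit (ξ ∘ₗ LinearMap.mulRight R a) = ∑ i ∈ r.index,
      LinearMap.mulRight R (antipode R (r.right i)) ∘ₗ rightHit ξ ∘ₗ
        LinearMap.mulRight R (r.left i) := by
  ext b
  calc rightHit (ξ ∘ₗ LinearMap.mulRight R a) b
      = _root_.TensorProduct.lid R A (ξ.rTensor A (comul b * (a ⊗ₜ 1))) := by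
        rw [Algebra.TensorProduct.lid_rTensor_mul_tmul, mul_one]; rfl
    _ = ∑ i ∈ r.index, _root_.TensorProduct.lid R A
          (ξ.rTensor A (comul (b * r.left i) * (1 ⊗ₜ antipode R (r.right i)))) := by
        rw [← sum_comul_mul_one_tmul_antipode r, Finset.mul_sum, map_sum, map_sum]
        simp only [Bialgebra.comul_mul, mul_assoc]
    _ = _ := by simp [Algebra.TensorProduct.lid_rTensor_mul_tmul, rightHit]

lemma sum_antipode_right_mul_left (hS : ∀ a : A, antipode R (antipode R a) = a) {ι : Type*}
    {a : A} (r : Repr R a ι) :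
    ∑ i ∈ r.index, antipode R (r.right i) * r.left i = counit (R := R) a • 1 := by
  simpa [map_sum, antipode_mul_antidistrib, hS] using
    congrArg (antipode R) (sum_antipode_mul_eq_smul r)

variable (R) in
def IsRightIntegral (χ : A) : Prop := ∀ a : A, χ * a = counit (R := R) a • χ

lemma IsRightIntegral.rightHit_comp_mulRight_apply {χ : A} (hχ : IsRightIntegral R χ)
    (ξ : Module.Dual R A) (a : A) :
    rightHit (ξ ∘ₗ LinearMap.mulRight R a) χ = rightHit ξ χ * antipode R a := by
  conv_rhs => rw [← sum_counit_smul (ℛ R a)]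
  simp [rightHit_comp_mulRight (ℛ R a), hχ _, Finset.mul_sum]

lemma counit_smul_eq_zero_of_forall_rightHit_mulRight_eq_zero [Module.Free R A]
    [Module.Finite R A] {c : A} {ξ : Module.Dual R A}
    (h : ∀ a : A, rightHit (ξ ∘ₗ LinearMap.mulRight R a) c = 0) :
    counit (R := R) c • ξ = 0 := by
  ext b
  let B := Module.Free.chooseBasis R A
  let r := ℛ R c
  calc (counit (R := R) c • ξ) b
      = ξ ((∑ i ∈ r.index, r.left i * antipode R (r.right i)) * b) := by
        rw [sum_mul_antipode_eq_smul, smul_mul_assoc, one_mul, map_smul]; rfl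
    _ = ∑ i ∈ r.index, ∑ k, B.repr (antipode R (r.right i) * b) k * ξ (r.left i * B k) := by
        rw [Finset.sum_mul, map_sum]
        refine Finset.sum_congr rfl fun i _ => ?_
        rw [mul_assoc]
        conv_lhs => rw [← B.sum_repr (antipode R (r.right i) * b)]
        simp only [Finset.mul_sum, mul_smul_comm, map_sum, map_smul, smul_eq_mul]
    _ = ∑ k, (B.coord k ∘ₗ LinearMap.mulRight R b ∘ₗ antipode R)
          (rightHit (ξ ∘ₗ LinearMap.mulRight R (B k)) c) := by
        rw [Finset.sum_comm]
        simp [r.rightHit_apply, mul_comm]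
    _ = 0 := by simp [h]

end Semiring

lemma trace_rightHit_comp_mulRight {R A : Type*} [CommRing R] [Ring A] [HopfAlgebra R A]
    [Module.Free R A] [Module.Finite R A] (hS : ∀ a : A, antipode R (antipode R a) = a)
    (ξ : Module.Dual R A) (a : A) :
    LinearMap.trace R A (rightHit (ξ ∘ₗ LinearMap.mulRight R a)) =
      counit (R := R) a * LinearMap.trace R A (rightHit ξ) := by
  let r := ℛ R a
  let φ : A →ₗ[R] R := LinearMap.trace R A ∘ₗ LinearMap.llcomp R A A A (rightHit ξ) ∘ₗ
    (LinearMap.mul R A).flip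
  calc LinearMap.trace R A (rightHit (ξ ∘ₗ LinearMap.mulRight R a))
      = ∑ i ∈ r.index, φ (antipode R (r.right i) * r.left i) := by
        rw [rightHit_comp_mulRight r, map_sum]
        refine Finset.sum_congr rfl fun i _ => ?_
        rw [LinearMap.trace_comp_comm', LinearMap.comp_assoc, ← LinearMap.mulRight_mul]
        rfl
    _ = φ (counit (R := R) a • 1) := by rw [← map_sum, sum_antipode_right_mul_left hS r]
    _ = counit (R := R) a * LinearMap.trace R A (rightHit ξ ∘ₗ LinearMap.mulRight R 1) :=
        map_smul φ _ _
    _ = counit (R := R) a * LinearMap.trace R A (rightHit ξ) := by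
        rw [LinearMap.mulRight_one, LinearMap.comp_id]

end HopfAlgebra

open HopfAlgebra

section Cometric

variable {A : Type*} [AddCommGroup A] [Module ℂ A] [Coalgebra ℂ A]

lemma dualConv_eq_transpose_rightHit (θ : Module.Dual ℂ A) :
    dualConv A θ = Module.Dual.transpose (R := ℂ) (rightHit θ) := by
  ext η a
  rw [Module.Dual.transpose_apply, LinearMap.comp_apply, (ℛ ℂ a).rightHit_apply]
  simp [dualConv, ← (ℛ ℂ a).eq]

lemma dualConv_dualConv (ξ η : Module.Dual ℂ A) :
    dualConv A (dualConv A ξ η) = dualConv A ξ ∘ₗ dualConv A η := by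
  ext ζ a
  exact congrArg (· a) (congrArg WithConv.ofConv
    (mul_assoc (WithConv.toConv ξ) (WithConv.toConv η) (WithConv.toConv ζ)))

variable [Module.Finite ℂ A]

lemma hopfCometric_isSymm : (hopfCometric A).IsSymm :=
  ⟨fun ξ η => by
    simp only [hopfCometric, LinearMap.compr₂_apply, LinearMap.comp_apply, dualConv_dualConv]
    exact LinearMap.trace_comp_comm' _ _⟩

lemma trace_dualConv (θ : Module.Dual ℂ A) :
    LinearMap.trace ℂ _ (dualConv A θ) = LinearMap.trace ℂ A (rightHit θ) := by
  rw [dualConv_eq_transpose_rightHit, LinearMap.trace_transpose']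

variable (A) in
noncomputable def cometricElement : A :=
  (Module.evalEquiv ℂ A).symm (LinearMap.trace ℂ (Module.Dual ℂ A) ∘ₗ dualConv A)

lemma apply_cometricElement (θ : Module.Dual ℂ A) :
    θ (cometricElement A) = LinearMap.trace ℂ A (rightHit θ) := by
  rw [cometricElement, Module.apply_evalEquiv_symm_apply, LinearMap.comp_apply, trace_dualConv]

lemma hopfCometric_apply (ξ η : Module.Dual ℂ A) :
    hopfCometric A ξ η = η (rightHit ξ (cometricElement A)) := by
  rw [hopfCometric, LinearMap.compr₂_apply, LinearMap.comp_apply, trace_dualConv,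
    ← apply_cometricElement, dualConv_eq_transpose_rightHit]
  rfl

lemma counit_cometricElement : counit (R := ℂ) (cometricElement A) = Module.finrank ℂ A := by
  rw [apply_cometricElement, rightHit_counit, LinearMap.trace_id]

end Cometric

section Hopf

variable {A : Type*} [Ring A] [HopfAlgebra ℂ A] [Module.Finite ℂ A]

lemma isRightIntegral_cometricElement (hS : ∀ a : A, antipode ℂ (antipode ℂ a) = a) :
    IsRightIntegral ℂ (cometricElement A) := by
  intro a
  rw [← sub_eq_zero, ← Module.forall_dual_apply_eq_zero_iff ℂ]
  intro φ
  rw [map_sub, map_smul, ← LinearMap.mulRight_apply (R := ℂ), ← LinearMap.comp_apply,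
    apply_cometricElement, apply_cometricElement, trace_rightHit_comp_mulRight hS, smul_eq_mul,
    sub_self]

lemma hopfCometric_separatingLeft (hS : ∀ a : A, antipode ℂ (antipode ℂ a) = a) :
    (hopfCometric A).SeparatingLeft := by
  intro ξ hξ
  have := Bialgebra.nontrivial ℂ (A := A)
  have h₀ : rightHit ξ (cometricElement A) = 0 :=
    (Module.forall_dual_apply_eq_zero_iff ℂ _).mp fun η => by rw [← hξ η, hopfCometric_apply]
  have hne : counit (R := ℂ) (cometricElement A) ≠ 0 := by
    rw [counit_cometricElement]
    exact_mod_cast Module.finrank_pos.ne'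
  refine (smul_eq_zero.mp (counit_smul_eq_zero_of_forall_rightHit_mulRight_eq_zero
    fun a => ?_)).resolve_left hne
  rw [(isRightIntegral_cometricElement hS).rightHit_comp_mulRight_apply, h₀, zero_mul]

end Hopf

/-- The cometric of a finite-dimensional involutory Hopf algebra over `ℂ` is a
nondegenerate bilinear form on the dual Hopf algebra. -/
theorem hopfCometric_nondegenerate
    (A : Type*) [Ring A] [HopfAlgebra ℂ A] [Module.Finite ℂ A]
    (hinv : ∀ a : A, HopfAlgebra.antipode (R := ℂ) (HopfAlgebra.antipode (R := ℂ) a) = a) :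
    (hopfCometric A).Nondegenerate :=
  hopfCometric_isSymm.isRefl.nondegenerate_iff_separatingLeft.mpr
    (hopfCometric_separatingLeft hinv)
end

section
/- For every n ≥ 1 and all a₁,…,aₙ ∈ A: tr(L_{S(a₁)} ∘ L_{S(a₂)} ∘ ⋯ ∘ L_{S(aₙ)}) = tr(L_{aₙ} ∘ ⋯ ∘ L_{a₂} ∘ L_{a₁}). (In components this is the relation C_{x₁x₂⋯xₙ} S^{x₁}{}_{y₁} S^{x₂}{}_{y₂} ⋯ S^{xₙ}{}_{yₙ} = C_{yₙ⋯y₂y₁}.) -/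
/-!
Both traces are traces of left multiplications: for `c = aₙ ⋯ a₁` the left side is
`tr L_{S c}` (as `S` is anti-multiplicative) and the right side is `tr L_c`. So it suffices
that the regular character `χ = tr ∘ L` satisfies `χ ∘ S = χ`.

When `S² = id`, `χ` is a right integral in the dual: `χ * g = g(1) χ` for every functional `g`.
Indeed `(χ * g)(b)` is the trace of `x ↦ Σ g(b₂) b₁ x`; writing
`Δ(b)(x ⊗ 1) = Σ Δ(b x₁)(1 ⊗ S x₂)` and moving `Δ` around the trace turns it into a trace on
`A ⊗ A`, which collapses by the skew antipode identity `Σ x₂ S(x₁) = ε(x) 1`.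
Since `S` is anti-comultiplicative, `χ ∘ S` is then a left integral, and computing
`χ * (χ ∘ S)` both ways gives `χ(1) χ = χ(1) (χ ∘ S)`, where `χ(1) = dim A ≠ 0`.
-/

open TensorProduct Coalgebra HopfAlgebra WithConv
open Algebra.TensorProduct (includeLeft includeRight)

lemma TensorProduct.rid_lTensor_mul_tmul_one {R A : Type*} [CommSemiring R] [Semiring A]
    [Algebra R A] (g : A →ₗ[R] R) (t : A ⊗[R] A) (x : A) :
    TensorProduct.rid R A (LinearMap.lTensor A g (t * (x ⊗ₜ 1))) =
      TensorProduct.rid R A (LinearMap.lTensor A g t) * x := by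
  induction t with
  | zero => simp
  | tmul p q => simp
  | add t t' ht ht' => simp [add_mul, ht, ht']

namespace LinearMap

variable {R A : Type*} [CommSemiring R] [Semiring A] [Bialgebra R A]

lemma toConv_comul_eq_includeLeft_mul_includeRight :
    toConv (comul (R := R) (A := A)) =
      toConv (includeLeft : A →ₐ[R] A ⊗[R] A).toLinearMap *
        toConv (includeRight : A →ₐ[R] A ⊗[R] A).toLinearMap := by
  have h : LinearMap.mul' R (A ⊗[R] A) ∘ₗ
      map (includeLeft : A →ₐ[R] A ⊗[R] A).toLinearMap includeRight.toLinearMap = .id := by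
    ext a b; simp
  rw [LinearMap.convMul_def, ofConv_toConv, ofConv_toConv, ← LinearMap.comp_assoc, h,
    LinearMap.id_comp]

lemma convMul_comp_mulRight_apply (f : WithConv (A →ₗ[R] R)) (g : A →ₗ[R] R) (s a : A) :
    (f * toConv (g ∘ₗ LinearMap.mulRight R s)) a =
      f (TensorProduct.rid R A (LinearMap.lTensor A g (comul a * (1 ⊗ₜ s)))) := by
  rw [(ℛ R a).convMul_apply, ← (ℛ R a).eq, Finset.sum_mul]
  simp [mul_comm]

end LinearMap

namespace HopfAlgebra

variable {R A : Type*} [CommSemiring R] [Semiring A] [HopfAlgebra R A]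

section AlgHom

variable {B : Type*} [Semiring B] [Algebra R B]

lemma algHom_comp_antipode_convMul (f : A →ₐ[R] B) :
    toConv (f.toLinearMap ∘ₗ antipode R) * toConv f.toLinearMap = 1 := by
  have h := LinearMap.algHom_comp_convMul_distrib f (toConv (antipode R)) (toConv .id)
  simp only [LinearMap.antipode_mul_id, LinearMap.comp_id] at h
  rw [← toConv_ofConv (_ * _), ← h]
  ext x; simp

lemma convMul_algHom_comp_antipode (f : A →ₐ[R] B) :
    toConv f.toLinearMap * toConv (f.toLinearMap ∘ₗ antipode R) = 1 := by
  have h := LinearMap.algHom_comp_convMul_distrib f (toConv .id) (toConv (antipode R))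
  simp only [LinearMap.id_mul_antipode, LinearMap.comp_id] at h
  rw [← toConv_ofConv (_ * _), ← h]
  ext x; simp

end AlgHom

lemma comul_convMul_includeRight_comp_antipode :
    toConv comul * toConv ((includeRight : A →ₐ[R] A ⊗[R] A).toLinearMap ∘ₗ antipode R) =
      toConv (includeLeft : A →ₐ[R] A ⊗[R] A).toLinearMap := by
  rw [LinearMap.toConv_comul_eq_includeLeft_mul_includeRight, mul_assoc,
    convMul_algHom_comp_antipode, mul_one]

lemma comul_comp_antipode :
    comul ∘ₗ antipode R =
      map (antipode R) (antipode R) ∘ₗ (TensorProduct.comm R A A).toLinearMap ∘ₗ comul := by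
  -- With `Δ = ι_L * ι_R`, the right side `(ι_R ∘ S) * (ι_L ∘ S)` is a left convolution inverse
  -- of `Δ`, and `Δ ∘ S` is a right one.
  have hG : toConv (map (antipode R) (antipode R) ∘ₗ
      (TensorProduct.comm R A A).toLinearMap ∘ₗ comul) =
      toConv ((includeRight : A →ₐ[R] A ⊗[R] A).toLinearMap ∘ₗ antipode R) *
        toConv ((includeLeft : A →ₐ[R] A ⊗[R] A).toLinearMap ∘ₗ antipode R) := by
    rw [LinearMap.convMul_def]
    congr 1
    simp only [← LinearMap.comp_assoc]
    congr 1
    ext a b; simp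
  have hG_mul_comul : toConv (map (antipode R) (antipode R) ∘ₗ
      (TensorProduct.comm R A A).toLinearMap ∘ₗ comul) * toConv comul = 1 := by
    rw [hG, LinearMap.toConv_comul_eq_includeLeft_mul_includeRight, mul_assoc,
      ← mul_assoc (toConv ((includeLeft : A →ₐ[R] A ⊗[R] A).toLinearMap ∘ₗ antipode R)),
      algHom_comp_antipode_convMul, one_mul, algHom_comp_antipode_convMul]
  exact congrArg ofConv (left_inv_eq_right_inv hG_mul_comul LinearMap.comul_right_inv).symm

lemma comp_antipode_convMul_comp_antipode {B : Type*} [CommSemiring B] [Algebra R B]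
    (f g : A →ₗ[R] B) :
    toConv (f ∘ₗ antipode R) * toConv (g ∘ₗ antipode R) =
      toConv ((toConv g * toConv f).ofConv ∘ₗ antipode R) := by
  have hswap : LinearMap.mul' R B ∘ₗ map (g ∘ₗ antipode R) (f ∘ₗ antipode R) ∘ₗ
      (TensorProduct.comm R A A).toLinearMap =
      LinearMap.mul' R B ∘ₗ map (f ∘ₗ antipode R) (g ∘ₗ antipode R) := by
    ext a b; simp [mul_comm]
  ext x
  have h := DFunLike.congr_fun hswap (comul x)
  simp only [LinearMap.comp_apply, LinearEquiv.coe_coe] at h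
  simp only [LinearMap.convMul_apply, LinearMap.comp_apply, ← h,
    ← LinearMap.comp_apply comul (antipode R), comul_comp_antipode]
  simp [TensorProduct.map_map]

lemma antipode_list_prod (l : List A) :
    antipode R l.prod = (l.map (antipode R)).reverse.prod := by
  induction l with
  | nil => simp [antipode_one]
  | cons x l ih => simp [antipode_mul_antidistrib, ih]

lemma sum_right_mul_antipode_left_eq_smul (hS : Function.Involutive (antipode R (A := A)))
    {a : A} {ι : Type*} (𝓡 : Repr R a ι) :
    ∑ i ∈ 𝓡.index, 𝓡.right i * antipode R (𝓡.left i) = counit (R := R) a • (1 : A) := by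
  have h := congrArg (antipode R) (sum_mul_antipode_eq_smul 𝓡)
  simpa [antipode_mul_antidistrib, hS _, antipode_one] using h

end HopfAlgebra

section Trace

variable {K : Type*} [Field K] {ι : Type*} [Fintype ι] [DecidableEq ι]

lemma Coalgebra.trace_comp_comul {C : Type*} [AddCommGroup C] [Module K C] [Coalgebra K C]
    [Module.Finite K C]
    (e : Module.Basis ι K C) (X : C ⊗[K] C →ₗ[K] C) :
    LinearMap.trace K C (X ∘ₗ comul) =
      ∑ j, ∑ k, (toConv (e.coord j) * toConv (e.coord k)) (X (e j ⊗ₜ e k)) := by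
  have hrepr (t : C ⊗[K] C) (j k : ι) :
      (e.tensorProduct e).repr t (j, k) = LinearMap.mul' K K (map (e.coord j) (e.coord k) t) := by
    induction t with
    | zero => simp
    | tmul p q => simp [mul_comm]
    | add x y hx hy => simp [hx, hy]
  rw [LinearMap.trace_comp_comm', LinearMap.trace_eq_matrix_trace K (e.tensorProduct e),
    Matrix.trace, Fintype.sum_prod_type]
  simp [LinearMap.toMatrix_apply, hrepr]

variable (K) in
noncomputable def regularCharacter (A : Type*) [Ring A] [Algebra K A] : A →ₗ[K] K :=
  LinearMap.trace K A ∘ₗ LinearMap.mul K A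

variable {A : Type*} [Ring A] [Algebra K A]

lemma regularCharacter_apply (a : A) :
    regularCharacter K A a = LinearMap.trace K A (LinearMap.mulLeft K a) := rfl

lemma regularCharacter_eq_sum_coord (e : Module.Basis ι K A) (a : A) :
    regularCharacter K A a = ∑ i, e.coord i (a * e i) := by
  rw [regularCharacter_apply, LinearMap.trace_eq_matrix_trace K e, Matrix.trace]
  simp only [Matrix.diag, LinearMap.toMatrix_apply, LinearMap.mulLeft_apply,
    Module.Basis.coord_apply]

end Trace

namespace HopfAlgebra

variable {K A : Type*} [Field K] [Ring A] [HopfAlgebra K A]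

lemma sum_coord_convMul_comp_mulRight_antipode (hS : Function.Involutive (antipode K (A := A)))
    {ι : Type*} [Fintype ι] (e : Module.Basis ι K A) (g : A →ₗ[K] K) :
    ∑ k, toConv (e.coord k) * toConv (g ∘ₗ LinearMap.mulRight K (antipode K (e k))) =
      g 1 • 1 := by
  ext y
  have hsum (z : A) : ∑ k, e.coord k z • antipode K (e k) = antipode K z := by
    simp_rw [← map_smul, ← map_sum, Module.Basis.coord_apply, e.sum_repr]
  calc _ = ∑ t ∈ (ℛ K y).index, g ((ℛ K y).right t * antipode K ((ℛ K y).left t)) := by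
        simp only [ofConv_sum, LinearMap.sum_apply, (ℛ K y).convMul_apply,
          LinearMap.comp_apply, LinearMap.mulRight_apply]
        rw [Finset.sum_comm]
        refine Finset.sum_congr rfl fun t _ => ?_
        rw [← hsum, Finset.mul_sum, map_sum]
        simp only [mul_smul_comm, map_smul, smul_eq_mul]
    _ = _ := by
        rw [← map_sum, sum_right_mul_antipode_left_eq_smul hS]
        simp [mul_comm]

variable [Module.Finite K A]

lemma regularCharacter_convMul (hS : Function.Involutive (antipode K (A := A)))
    (g : A →ₗ[K] K) :
    toConv (regularCharacter K A) * toConv g = g 1 • toConv (regularCharacter K A) := by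
  let e := Module.finBasis K A
  let contractG : A ⊗[K] A →ₗ[K] A := (TensorProduct.rid K A).toLinearMap ∘ₗ LinearMap.lTensor A g
  let V : A ⊗[K] A →ₗ[K] A ⊗[K] A := LinearMap.mul' K (A ⊗[K] A) ∘ₗ
    map comul ((includeRight : A →ₐ[K] A ⊗[K] A).toLinearMap ∘ₗ antipode K)
  ext b
  let X := contractG ∘ₗ LinearMap.mulLeft K (comul b) ∘ₗ V
  -- `Δ(b)(x ⊗ 1) = Σ Δ(b x₁)(1 ⊗ S x₂)`
  have hX : LinearMap.mulLeft K (contractG (comul b)) = X ∘ₗ comul := by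
    have hV : V ∘ₗ comul = (includeLeft : A →ₐ[K] A ⊗[K] A).toLinearMap :=
      congrArg ofConv comul_convMul_includeRight_comp_antipode
    ext x
    simp only [X, LinearMap.comp_assoc, hV]
    simp [contractG, TensorProduct.rid_lTensor_mul_tmul_one]
  calc (toConv (regularCharacter K A) * toConv g) b
      = LinearMap.trace K A (LinearMap.mulLeft K (contractG (comul b))) := by
        have h := LinearMap.convMul_comp_mulRight_apply (toConv (regularCharacter K A)) g 1 b
        rwa [LinearMap.mulRight_one, LinearMap.comp_id, ← Algebra.TensorProduct.one_def,
          mul_one] at h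
    _ = ∑ j, ∑ k, (toConv (e.coord j) * toConv (e.coord k)) (X (e j ⊗ₜ e k)) := by
        rw [hX, Coalgebra.trace_comp_comul e]
    _ = ∑ j, (toConv (e.coord j) * ∑ k, toConv (e.coord k) *
          toConv (g ∘ₗ LinearMap.mulRight K (antipode K (e k)))) (b * e j) := by
        refine Finset.sum_congr rfl fun j _ => ?_
        simp only [Finset.mul_sum, ofConv_sum, LinearMap.sum_apply, ← mul_assoc]
        refine Finset.sum_congr rfl fun k _ => ?_
        rw [LinearMap.convMul_comp_mulRight_apply, Bialgebra.comul_mul, mul_assoc]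
        simp [X, contractG, V]
    _ = g 1 • regularCharacter K A b := by
        rw [sum_coord_convMul_comp_mulRight_antipode hS]
        simp [regularCharacter_eq_sum_coord e, Finset.mul_sum]

lemma convMul_regularCharacter_comp_antipode (hS : Function.Involutive (antipode K (A := A)))
    (g : A →ₗ[K] K) :
    toConv g * toConv (regularCharacter K A ∘ₗ antipode K) =
      g 1 • toConv (regularCharacter K A ∘ₗ antipode K) := by
  have hSS : antipode K ∘ₗ antipode K = (LinearMap.id : A →ₗ[K] A) := LinearMap.ext hS
  calc toConv g * toConv (regularCharacter K A ∘ₗ antipode K)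
      = toConv ((g ∘ₗ antipode K) ∘ₗ antipode K) *
          toConv (regularCharacter K A ∘ₗ antipode K) := by
        rw [LinearMap.comp_assoc, hSS, LinearMap.comp_id]
    _ = toConv ((toConv (regularCharacter K A) * toConv (g ∘ₗ antipode K)).ofConv ∘ₗ
          antipode K) := comp_antipode_convMul_comp_antipode _ _
    _ = g 1 • toConv (regularCharacter K A ∘ₗ antipode K) := by
        rw [regularCharacter_convMul hS]
        ext x; simp [antipode_one]

lemma regularCharacter_comp_antipode [CharZero K]
    (hS : Function.Involutive (antipode K (A := A))) :
    regularCharacter K A ∘ₗ antipode K = regularCharacter K A := by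
  have : Nontrivial A := Bialgebra.nontrivial K
  have hone : regularCharacter K A 1 = Module.finrank K A := by
    simp [regularCharacter_apply, LinearMap.mulLeft_one]
  have hne : regularCharacter K A 1 ≠ 0 := by
    rw [hone]; exact Nat.cast_ne_zero.mpr Module.finrank_pos.ne'
  have h := regularCharacter_convMul hS (regularCharacter K A ∘ₗ antipode K)
  rw [convMul_regularCharacter_comp_antipode hS, LinearMap.comp_apply, antipode_one] at h
  exact congrArg ofConv (smul_right_injective _ hne h)

end HopfAlgebra

/-- For every `n ≥ 1` and all `a₁, …, aₙ ∈ A`: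
`tr(L_{S(a₁)} ∘ L_{S(a₂)} ∘ ⋯ ∘ L_{S(aₙ)}) = tr(L_{aₙ} ∘ ⋯ ∘ L_{a₂} ∘ L_{a₁})`.
(In components: `C_{x₁⋯xₙ} S^{x₁}{}_{y₁} ⋯ S^{xₙ}{}_{yₙ} = C_{yₙ⋯y₂y₁}`.)
Here products of endomorphisms are compositions, in the written order. -/
theorem trace_mulLeft_antipode
    (A : Type*) [Ring A] [HopfAlgebra ℂ A] [Module.Finite ℂ A]
    (hinv : ∀ a : A, HopfAlgebra.antipode (R := ℂ) (HopfAlgebra.antipode (R := ℂ) a) = a) :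
    ∀ (n : ℕ), 1 ≤ n → ∀ (a : Fin n → A),
      LinearMap.trace ℂ A
          ((List.ofFn (fun i =>
            (LinearMap.mulLeft ℂ (HopfAlgebra.antipode (R := ℂ) (a i)) :
              Module.End ℂ A))).prod)
        = LinearMap.trace ℂ A
            ((List.ofFn (fun i =>
              (LinearMap.mulLeft ℂ (a i) : Module.End ℂ A))).reverse.prod) := by
  intro n _ a
  have hprod (l : List A) :
      (l.map (LinearMap.mulLeft ℂ)).prod = LinearMap.mulLeft ℂ l.prod :=
    (map_list_prod (Algebra.lmul ℂ A) l).symm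
  set c := (List.ofFn a).reverse.prod
  calc _ = regularCharacter ℂ A (antipode ℂ c) := by
        rw [antipode_list_prod, List.map_reverse, List.reverse_reverse, regularCharacter_apply,
          ← hprod, List.map_map, List.map_ofFn]
        rfl
    _ = regularCharacter ℂ A c :=
        DFunLike.congr_fun (regularCharacter_comp_antipode hinv) c
    _ = _ := by
        rw [regularCharacter_apply, ← hprod, List.map_reverse, List.map_ofFn]
        rfl
end
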